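/- If the Newell–Littlewood coefficient d^λ_{μ,ν} is nonzero, then the lengths of the three partitions form the sides of a (possibly degenerate) triangle: |ℓ(λ) − ℓ(μ)| ≤ ℓ(ν) ≤ ℓ(λ) + ℓ(μ). -/
import Mathlib


/-- The length (number of nonzero parts / rows) of a partition. -/
noncomputable def partLen (l : YoungDiagram) : ℕ := l.rowLens.length

/-- The Newell–Littlewood coefficients, defined from Littlewood–Richardson
coefficients `c` by `d^λ_{μ,ν} = Σ_{α,β,γ} c^λ_{α,β} c^μ_{γ,β} c^ν_{α,γ}`. -/
noncomputable def newellLittlewood (c : YoungDiagram → YoungDiagram → YoungDiagram → ℕ)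
    (l m n : YoungDiagram) : ℕ :=
  ∑ᶠ a : YoungDiagram, ∑ᶠ b : YoungDiagram, ∑ᶠ g : YoungDiagram,
    c l a b * c m g b * c n a g

/-- if `d^λ_{μ,ν} ≠ 0` then the lengths of the three partitions form
the sides of a (possibly degenerate) triangle: `|ℓ(λ) − ℓ(μ)| ≤ ℓ(ν) ≤ ℓ(λ) + ℓ(μ)`.
Inputs: `c^λ_{α,β} ≠ 0` implies `ℓ(λ) ≤ ℓ(α) + ℓ(β)` and `max(ℓ(α),ℓ(β)) ≤ ℓ(λ)`. -/
theorem newellLittlewood_length_triangle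
    (c : YoungDiagram → YoungDiagram → YoungDiagram → ℕ)
    (hc_len : ∀ l a b : YoungDiagram, c l a b ≠ 0 →
      partLen l ≤ partLen a + partLen b ∧ partLen a ≤ partLen l ∧ partLen b ≤ partLen l)
    (l m n : YoungDiagram) (h : newellLittlewood c l m n ≠ 0) :
    |(partLen l : ℤ) - (partLen m : ℤ)| ≤ (partLen n : ℤ) ∧
      (partLen n : ℤ) ≤ (partLen l : ℤ) + (partLen m : ℤ) := by
  obtain ⟨a, b, g, hne⟩ : ∃ a b g, c l a b * c m g b * c n a g ≠ 0 := by
    by_contra hall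
    push_neg at hall
    exact h (by
      unfold newellLittlewood
      exact finsum_eq_zero_of_forall_eq_zero fun a =>
        finsum_eq_zero_of_forall_eq_zero fun b =>
          finsum_eq_zero_of_forall_eq_zero fun g => hall a b g)
  have h1 := hc_len l a b (fun hz => hne (by rw [hz]; ring))
  have h2 := hc_len m g b (fun hz => hne (by rw [hz]; ring))
  have h3 := hc_len n a g (fun hz => hne (by rw [hz]; ring))
  rw [abs_sub_le_iff]
  omega
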